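/- Consider the skeptical aggregation operator so on an argumentation framework AF = ⟨𝒜, ⇀⟩, and agents 1,…,n each having the Issue-wise distance based preference ⪰_{i,|⊖_W|}, where agent i's most preferred labeling is the complete labeling ℒᵢ. Let P = (ℒ₁,…,ℒₙ) be the sincere profile, let k be an agent and ℒ'ₖ a labeling, and let P' be P with ℒₖ replaced by ℒ'ₖ; suppose so(P) and so(P') exist. If ℒ'ₖ is a strategic lie for agent k, i.e. so(P') ≻_{k,|⊖_W|} so(P), then the lie is benevolent: so(P') ⪰_{i,|⊖_W|} so(P) for every agent i, and so(P') ≻_{j,|⊖_W|} so(P) for some agent j ≠ k. -/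
import Mathlib


/- Labels for arguments: in, out, undec -/
inductive Lab where
  | IN : Lab
  | OUT : Lab
  | UNDEC : Lab
deriving DecidableEq

variable {A : Type}

/-- Arguments labeled `in` by a labeling. -/
def labIn (L : A → Lab) : Set A := {a | L a = Lab.IN}
/-- Arguments labeled `out` by a labeling. -/
def labOut (L : A → Lab) : Set A := {a | L a = Lab.OUT}
/-- Arguments labeled `undec` by a labeling. -/
def labUndec (L : A → Lab) : Set A := {a | L a = Lab.UNDEC}
/-- Decided arguments: labeled `in` or `out`. -/
def labDec (L : A → Lab) : Set A := labIn L ∪ labOut L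

/-- Admissible labeling with respect to a defeat relation `df` (`df b a` : b defeats a). -/
def Admissible (df : A → A → Prop) (L : A → Lab) : Prop :=
  ∀ a : A,
    (L a = Lab.IN → ∀ b : A, df b a → L b = Lab.OUT) ∧
    (L a = Lab.OUT → ∃ b : A, df b a ∧ L b = Lab.IN)

/-- Complete labeling. -/
def Complete (df : A → A → Prop) (L : A → Lab) : Prop :=
  Admissible df L ∧
  ∀ a : A, L a = Lab.UNDEC →
    ¬ (∀ b : A, df b a → L b = Lab.OUT) ∧ ¬ (∃ b : A, df b a ∧ L b = Lab.IN)

/-- `L1 ⊑ L2` : less or equally committed. -/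
def LabLeq (L1 L2 : A → Lab) : Prop := labIn L1 ⊆ labIn L2 ∧ labOut L1 ⊆ labOut L2

/-- `L1 ≈ L2` : compatible labelings. -/
def LabCompatible (L1 L2 : A → Lab) : Prop :=
  labIn L1 ∩ labOut L2 = ∅ ∧ labOut L1 ∩ labIn L2 = ∅

/-- Hamming set `L1 ⊖ L2`. -/
def hamSet (L1 L2 : A → Lab) : Set A := {a | L1 a ≠ L2 a}
/-- Hamming distance `L1 |⊖| L2`. -/
noncomputable def hamDist (L1 L2 : A → Lab) : ℕ := (hamSet L1 L2).ncard

/-- in–out Hamming set `L1 ⊖ⁱᵒ L2`. -/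
def ioSet (L1 L2 : A → Lab) : Set A :=
  {a | (L1 a = Lab.IN ∧ L2 a = Lab.OUT) ∨ (L1 a = Lab.OUT ∧ L2 a = Lab.IN)}
/-- dec–undec Hamming set `L1 ⊖ᵈᵘ L2`. -/
def duSet (L1 L2 : A → Lab) : Set A :=
  {a | (a ∈ labDec L1 ∧ L2 a = Lab.UNDEC) ∨ (L1 a = Lab.UNDEC ∧ a ∈ labDec L2)}
/-- IUO Hamming sets `L1 ⊖ᴹ L2` as a pair. -/
def iuoSets (L1 L2 : A → Lab) : Set A × Set A := (ioSet L1 L2, duSet L1 L2)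
/-- Componentwise inclusion on pairs of sets. -/
def PairSub {α : Type} (p q : Set α × Set α) : Prop := p.1 ⊆ q.1 ∧ p.2 ⊆ q.2
/-- IUO Hamming distance `L1 |⊖ᴹ| L2`. -/
noncomputable def iuoDist (L1 L2 : A → Lab) : ℕ :=
  2 * (ioSet L1 L2).ncard + (duSet L1 L2).ncard

/-- Two arguments are in-sync (with respect to the complete labelings of the framework). -/
def InSync (df : A → A → Prop) (a b : A) : Prop :=
  (∀ L : A → Lab, Complete df L → L a = L b) ∨
  (∀ L : A → Lab, Complete df L →
    (L a = Lab.IN ↔ L b = Lab.OUT) ∧ (L a = Lab.OUT ↔ L b = Lab.IN))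

/-- An issue: an equivalence class of the in-sync relation. -/
def IsIssue (df : A → A → Prop) (B : Set A) : Prop :=
  ∃ a : A, B = {b | InSync df a b}

/-- Issue-wise set `L1 ⊖_W L2`. -/
def iwSet (df : A → A → Prop) (L1 L2 : A → Lab) : Set (Set A) :=
  {B | IsIssue df B ∧ ∃ a ∈ B, L1 a ≠ L2 a}
/-- Issue-wise distance `L1 |⊖_W| L2`. -/
noncomputable def iwDist (df : A → A → Prop) (L1 L2 : A → Lab) : ℕ := (iwSet df L1 L2).ncard

/-- in–out Issue-wise set `L1 ⊖_Wⁱᵒ L2`. -/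
def iwIoSet (df : A → A → Prop) (L1 L2 : A → Lab) : Set (Set A) :=
  {B | IsIssue df B ∧ ∃ a ∈ B, a ∈ ioSet L1 L2}
/-- dec–undec Issue-wise set `L1 ⊖_Wᵈᵘ L2`. -/
def iwDuSet (df : A → A → Prop) (L1 L2 : A → Lab) : Set (Set A) :=
  {B | IsIssue df B ∧ ∃ a ∈ B, a ∈ duSet L1 L2}
/-- IUO Issue-wise sets `L1 ⊖_Wᴹ L2` as a pair. -/
def iwIuoSets (df : A → A → Prop) (L1 L2 : A → Lab) : Set (Set A) × Set (Set A) :=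
  (iwIoSet df L1 L2, iwDuSet df L1 L2)
/-- IUO Issue-wise distance `L1 |⊖_Wᴹ| L2`. -/
noncomputable def iwIuoDist (df : A → A → Prop) (L1 L2 : A → Lab) : ℕ :=
  2 * (iwIoSet df L1 L2).ncard + (iwDuSet df L1 L2).ncard

/- Preferences: `pref Li L L'` means `L ⪰ L'` for an agent whose most preferred labeling is `Li`. -/
/-- Hamming set based preference `⪰_{i,⊖}`. -/
def hamSetPref (Li L L' : A → Lab) : Prop := hamSet L Li ⊆ hamSet L' Li
/-- Hamming distance based preference `⪰_{i,|⊖|}`. -/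
def hamDistPref (Li L L' : A → Lab) : Prop := hamDist L Li ≤ hamDist L' Li
/-- IUO Hamming sets based preference `⪰_{i,⊖ᴹ}`. -/
def iuoSetPref (Li L L' : A → Lab) : Prop := PairSub (iuoSets L Li) (iuoSets L' Li)
/-- IUO Hamming distance based preference `⪰_{i,|⊖ᴹ|}`. -/
def iuoDistPref (Li L L' : A → Lab) : Prop := iuoDist L Li ≤ iuoDist L' Li
/-- Issue-wise set based preference `⪰_{i,⊖_W}`. -/
def iwSetPref (df : A → A → Prop) (Li L L' : A → Lab) : Prop := iwSet df L Li ⊆ iwSet df L' Li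
/-- Issue-wise distance based preference `⪰_{i,|⊖_W|}`. -/
def iwDistPref (df : A → A → Prop) (Li L L' : A → Lab) : Prop := iwDist df L Li ≤ iwDist df L' Li
/-- IUO Issue-wise sets based preference `⪰_{i,⊖_Wᴹ}`. -/
def iwIuoSetPref (df : A → A → Prop) (Li L L' : A → Lab) : Prop :=
  PairSub (iwIuoSets df L Li) (iwIuoSets df L' Li)
/-- IUO Issue-wise distance based preference `⪰_{i,|⊖_Wᴹ|}`. -/
def iwIuoDistPref (df : A → A → Prop) (Li L L' : A → Lab) : Prop :=
  iwIuoDist df L Li ≤ iwIuoDist df L' Li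

/-- Strict part of a preference relation. -/
def StrictPref (pref : (A → Lab) → (A → Lab) → Prop) (L L' : A → Lab) : Prop :=
  pref L L' ∧ ¬ pref L' L

/-- `L'` Pareto dominates `L` with respect to the profile of preference relations `pref`. -/
def Dominates {ι : Type} (pref : ι → (A → Lab) → (A → Lab) → Prop) (L' L : A → Lab) : Prop :=
  (∀ i : ι, pref i L' L) ∧ ∃ j : ι, StrictPref (pref j) L' L

/-- `L` is Pareto optimal in `S`: no element of `S` Pareto dominates `L`. -/
def ParetoOptimalIn {ι : Type} (pref : ι → (A → Lab) → (A → Lab) → Prop)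
    (S : Set (A → Lab)) (L : A → Lab) : Prop :=
  ∀ L' ∈ S, ¬ Dominates pref L' L

/-- `LSO` is the skeptical outcome of profile `P`: the greatest admissible labeling below the
profile. -/
def IsSkeptical {n : ℕ} (df : A → A → Prop) (P : Fin n → (A → Lab)) (LSO : A → Lab) : Prop :=
  Admissible df LSO ∧ (∀ i : Fin n, LabLeq LSO (P i)) ∧
  ∀ L : A → Lab, Admissible df L → (∀ i : Fin n, LabLeq L (P i)) → LabLeq L LSO

/-- `LC` is the credulous initial outcome of the profile `P`. -/
def IsCio {n : ℕ} (P : Fin n → (A → Lab)) (LC : A → Lab) : Prop :=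
  ∀ a : A,
    (LC a = Lab.IN ↔ (∃ i : Fin n, P i a = Lab.IN) ∧ ∀ j : Fin n, P j a ≠ Lab.OUT) ∧
    (LC a = Lab.OUT ↔ (∃ i : Fin n, P i a = Lab.OUT) ∧ ∀ j : Fin n, P j a ≠ Lab.IN)

/-- `LCO` is the credulous outcome of `P`: the greatest admissible labeling `⊑ cio(P)`. -/
def IsCredulous {n : ℕ} (df : A → A → Prop) (P : Fin n → (A → Lab)) (LCO : A → Lab) : Prop :=
  ∃ LCIO : A → Lab, IsCio P LCIO ∧ Admissible df LCO ∧ LabLeq LCO LCIO ∧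
    ∀ L : A → Lab, Admissible df L → LabLeq L LCIO → LabLeq L LCO

/-- `LSCO` is the super credulous outcome of `P` given credulous outcome `LCO`:
the least complete labeling above `LCO`. -/
def IsSuperCredulousOf (df : A → A → Prop) (LCO LSCO : A → Lab) : Prop :=
  Complete df LSCO ∧ LabLeq LCO LSCO ∧
    ∀ L : A → Lab, Complete df L → LabLeq LCO L → LabLeq LSCO L

/-- If `L1 ⊑ L2` and `L1` decides `a`, then `L2` agrees with `L1` at `a`. -/
lemma labLeq_eq_of_ne_undec {L1 L2 : A → Lab} (h : LabLeq L1 L2) {a : A}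
    (ha : L1 a ≠ Lab.UNDEC) : L2 a = L1 a := by
  cases hv : L1 a with
  | IN => exact h.1 hv
  | OUT => exact h.2 hv
  | UNDEC => exact absurd hv ha

/-- Within an in-sync pair, a complete labeling is undecided on one iff on the other. -/
lemma sync_undec {df : A → A → Prop} {L : A → Lab} (hC : Complete df L) {r a : A}
    (h : InSync df r a) : (L a = Lab.UNDEC ↔ L r = Lab.UNDEC) := by
  rcases h with h | h
  · rw [h L hC]
  · obtain ⟨h1, h2⟩ := h L hC
    cases hr : L r <;> cases ha : L a <;> simp_all

/-- Cardinality comparison via transfer of gains and losses. -/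
lemma card_compare {α : Type*} [Finite α] {S S' T T' : Set α}
    (h1 : S' \ S ⊆ T' \ T) (h2 : T \ T' ⊆ S \ S') (h3 : T'.ncard < T.ncard) :
    S'.ncard < S.ncard := by
  have eS : (S ∩ S').ncard + (S \ S').ncard = S.ncard :=
    Set.ncard_inter_add_ncard_diff_eq_ncard S S' (Set.toFinite S)
  have eS' : (S' ∩ S).ncard + (S' \ S).ncard = S'.ncard :=
    Set.ncard_inter_add_ncard_diff_eq_ncard S' S (Set.toFinite S')
  have eT : (T ∩ T').ncard + (T \ T').ncard = T.ncard :=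
    Set.ncard_inter_add_ncard_diff_eq_ncard T T' (Set.toFinite T)
  have eT' : (T' ∩ T).ncard + (T' \ T).ncard = T'.ncard :=
    Set.ncard_inter_add_ncard_diff_eq_ncard T' T (Set.toFinite T')
  have cST : (S ∩ S').ncard = (S' ∩ S).ncard := by rw [Set.inter_comm]
  have cTT : (T ∩ T').ncard = (T' ∩ T).ncard := by rw [Set.inter_comm]
  have m1 : (S' \ S).ncard ≤ (T' \ T).ncard := Set.ncard_le_ncard h1 (Set.toFinite _)
  have m2 : (T \ T').ncard ≤ (S \ S').ncard := Set.ncard_le_ncard h2 (Set.toFinite _)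
  omega

/-- with the skeptical operator and Issue-wise distance based preferences, every
strategic lie is benevolent. -/
theorem skeptical_lies_benevolent_iwDist {A : Type} [Fintype A] {n : ℕ}
    (df : A → A → Prop) (P : Fin n → (A → Lab)) (hP : ∀ i : Fin n, Complete df (P i))
    (k : Fin n) (L'k : A → Lab) (LSO L'SO : A → Lab)
    (hSO : IsSkeptical df P LSO)
    (hSO' : IsSkeptical df (Function.update P k L'k) L'SO)
    (hlie : StrictPref (iwDistPref df (P k)) L'SO LSO) :
    (∀ i : Fin n, iwDistPref df (P i) L'SO LSO) ∧
    ∃ j : Fin n, j ≠ k ∧ StrictPref (iwDistPref df (P j)) L'SO LSO := by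
  obtain ⟨hlie1, hlie2⟩ := hlie
  have hk : iwDist df L'SO (P k) < iwDist df LSO (P k) := not_le.mp hlie2
  have hLle : ∀ i, LabLeq LSO (P i) := hSO.2.1
  have hL'le : ∀ i, i ≠ k → LabLeq L'SO (P i) := fun i hi => by
    have h := hSO'.2.1 i
    rwa [Function.update_of_ne hi] at h
  by_cases hex : ∃ j : Fin n, j ≠ k
  · obtain ⟨j0, hj0⟩ := hex
    -- losses of agent i are losses of agent k
    have keyA : ∀ i, i ≠ k →
        iwSet df L'SO (P i) \ iwSet df LSO (P i) ⊆ iwSet df L'SO (P k) \ iwSet df LSO (P k) := by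
      intro i hi B hB
      obtain ⟨hB1, hB2⟩ := hB
      obtain ⟨⟨r, rfl⟩, a, haB, hne⟩ := hB1
      have hu' : L'SO a = Lab.UNDEC := by
        by_contra h
        exact hne (labLeq_eq_of_ne_undec (hL'le i hi) h).symm
      have hallL : ∀ b ∈ {b | InSync df r b}, LSO b = P i b := by
        intro b hb
        by_contra hc
        exact hB2 ⟨⟨r, rfl⟩, b, hb, hc⟩
      have hLa : LSO a = P i a := hallL a haB
      have hPia : P i a ≠ Lab.UNDEC := fun h => hne (by rw [hu', h])
      have hLa_ne : LSO a ≠ Lab.UNDEC := by rw [hLa]; exact hPia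
      have hPka : P k a = LSO a := labLeq_eq_of_ne_undec (hLle k) hLa_ne
      refine ⟨⟨⟨r, rfl⟩, a, haB, ?_⟩, ?_⟩
      · rw [hu', hPka]
        exact fun h => hLa_ne h.symm
      · rintro ⟨-, b, hbB, hneb⟩
        have hLb : LSO b = Lab.UNDEC := by
          by_contra h
          exact hneb (labLeq_eq_of_ne_undec (hLle k) h).symm
        have hPib : P i b = Lab.UNDEC := by rw [← hallL b hbB]; exact hLb
        have hr : P i r = Lab.UNDEC := (sync_undec (hP i) hbB).mp hPib
        exact hPia ((sync_undec (hP i) haB).mpr hr)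
    -- gains of agent k are gains of agent i
    have keyB : ∀ i, i ≠ k →
        iwSet df LSO (P k) \ iwSet df L'SO (P k) ⊆ iwSet df LSO (P i) \ iwSet df L'SO (P i) := by
      intro i hi B hB
      obtain ⟨hB1, hB2⟩ := hB
      obtain ⟨⟨r, rfl⟩, a, haB, hne⟩ := hB1
      have hLa : LSO a = Lab.UNDEC := by
        by_contra h
        exact hne (labLeq_eq_of_ne_undec (hLle k) h).symm
      have hall : ∀ b ∈ {b | InSync df r b}, L'SO b = P k b := by
        intro b hb
        by_contra hc
        exact hB2 ⟨⟨r, rfl⟩, b, hb, hc⟩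
      have hL'a : L'SO a = P k a := hall a haB
      have hPka_ne : P k a ≠ Lab.UNDEC := fun h => hne (by rw [hLa, h])
      have hL'a_ne : L'SO a ≠ Lab.UNDEC := by rw [hL'a]; exact hPka_ne
      have hPia : P i a = L'SO a := labLeq_eq_of_ne_undec (hL'le i hi) hL'a_ne
      refine ⟨⟨⟨r, rfl⟩, a, haB, ?_⟩, ?_⟩
      · rw [hLa, hPia, hL'a]
        exact fun h => hPka_ne h.symm
      · rintro ⟨-, b, hbB, hneb⟩
        have hL'b : L'SO b = Lab.UNDEC := by
          by_contra h
          exact hneb (labLeq_eq_of_ne_undec (hL'le i hi) h).symm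
        have hPkb : P k b = Lab.UNDEC := by rw [← hall b hbB]; exact hL'b
        have hr : P k r = Lab.UNDEC := (sync_undec (hP k) hbB).mp hPkb
        exact hPka_ne ((sync_undec (hP k) haB).mpr hr)
    have hstrict : ∀ i, i ≠ k → iwDist df L'SO (P i) < iwDist df LSO (P i) := by
      intro i hi
      exact card_compare (keyA i hi) (keyB i hi) hk
    constructor
    · intro i
      by_cases hik : i = k
      · rw [hik]; exact hlie1
      · exact le_of_lt (hstrict i hik)
    · exact ⟨j0, hj0, le_of_lt (hstrict j0 hj0), not_le.mpr (hstrict j0 hj0)⟩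
  · -- no other agent: then LSO = P k and the strict lie is impossible
    push_neg at hex
    have hPk : LabLeq (P k) LSO := by
      refine hSO.2.2 (P k) (hP k).1 fun i => ?_
      rw [hex i]
      exact ⟨subset_rfl, subset_rfl⟩
    have heq : ∀ a, LSO a = P k a := by
      intro a
      cases hv : LSO a with
      | IN => exact (hLle k).1 hv |>.symm
      | OUT => exact (hLle k).2 hv |>.symm
      | UNDEC =>
        cases hw : P k a with
        | IN => rw [← hv, hPk.1 hw]
        | OUT => rw [← hv, hPk.2 hw]
        | UNDEC => rfl
    have hempty : iwSet df LSO (P k) = ∅ := by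
      rw [Set.eq_empty_iff_forall_notMem]
      rintro B ⟨-, a, -, hne⟩
      exact hne (heq a)
    have : iwDist df LSO (P k) = 0 := by
      rw [iwDist, hempty, Set.ncard_empty]
    omega
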